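/- For every real number x in the closed interval [x'_0, x''_0] there exists a digit sequence (α_n) with α_n ∈ {0,1,…,s−1} such that x = Σ_{n=1}^∞ ε_n α_n / s^n, i.e. x = S(α). -/

import Mathlib

open scoped Classical BigOperators

/-- Sign of the `n`-th term: `-1` if `n ∈ N_B`, `+1` otherwise. -/
noncomputable def eps (B : Set ℕ+) (n : ℕ+) : ℝ := if n ∈ B then -1 else 1

/-- The quasi-nega-s value of a digit sequence `α`:
`S(α) = Σ_{n≥1} ε_n α_n / s^n`. -/
noncomputable def qnsVal (s : ℕ) (B : Set ℕ+) (α : ℕ+ → ℕ) : ℝ :=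
  ∑' n : ℕ+, eps B n * (α n : ℝ) / (s : ℝ) ^ (n : ℕ)

/-- `x'_0 = -Σ_{n ∈ N_B} (s-1)/s^n`. -/
noncomputable def x0lo (s : ℕ) (B : Set ℕ+) : ℝ :=
  -∑' n : ℕ+, (if n ∈ B then ((s : ℝ) - 1) / (s : ℝ) ^ (n : ℕ) else 0)

/-- `x''_0 = Σ_{n ∉ N_B} (s-1)/s^n`. -/
noncomputable def x0hi (s : ℕ) (B : Set ℕ+) : ℝ :=
  ∑' n : ℕ+, (if n ∉ B then ((s : ℝ) - 1) / (s : ℝ) ^ (n : ℕ) else 0)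

/-! Translating by `-x'_0` maps `[x'_0, x''_0]` onto `[0, 1]`, because
`x''_0 - x'_0 = Σ_{n ≥ 1} (s - 1) / s^n = 1`. Expand `x - x'_0` in base `s` with digits `β_n` and
complement the digits on `N_B`: there `ε_n (s - 1 - β_n) = β_n - (s - 1)`, so the new digit
sequence has value `(x - x'_0) + x'_0 = x`. -/

open Set

section

variable {s : ℕ}

lemma hasSum_pnat_ofDigits (d : ℕ → Fin s) :
    HasSum (fun n : ℕ+ => ((d ((n : ℕ) - 1) : ℕ) : ℝ) / (s : ℝ) ^ (n : ℕ)) (Real.ofDigits d) := by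
  rw [hasSum_pnat_iff_hasSum_succ (f := fun k => ((d (k - 1) : ℕ) : ℝ) / (s : ℝ) ^ k)]
  simp only [Nat.add_sub_cancel, div_eq_mul_inv]
  exact Real.summable_ofDigitsTerm.hasSum

lemma exists_digits_hasSum (hs : 1 < s) {y : ℝ} (hy : y ∈ Icc 0 1) :
    ∃ β : ℕ+ → ℕ, (∀ n, β n < s) ∧ HasSum (fun n : ℕ+ => (β n : ℝ) / (s : ℝ) ^ (n : ℕ)) y := by
  obtain ⟨d, -, rfl⟩ := Real.ofDigits_SurjOn hs hy
  exact ⟨fun n => d ((n : ℕ) - 1), fun n => (d _).isLt, hasSum_pnat_ofDigits d⟩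

lemma hasSum_sub_one_div_pow (hs : 1 < s) :
    HasSum (fun n : ℕ+ => ((s : ℝ) - 1) / (s : ℝ) ^ (n : ℕ)) 1 := by
  have h := hasSum_pnat_ofDigits (fun _ => (⟨s - 1, Nat.sub_one_lt_of_lt hs⟩ : Fin s))
  rwa [Real.ofDigits_const_last_eq_one' hs, Nat.cast_sub hs.le, Nat.cast_one] at h

lemma x0hi_sub_x0lo (hs : 1 < s) (B : Set ℕ+) : x0hi s B - x0lo s B = 1 := by
  have hc := hasSum_sub_one_div_pow hs
  have hsplit := (hc.summable.indicator Bᶜ).hasSum.add (hc.summable.indicator B).hasSum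
  simp only [indicator_compl_add_self_apply] at hsplit
  rw [x0hi, x0lo, sub_neg_eq_add]
  simpa only [indicator_apply, mem_compl_iff] using hsplit.unique hc

noncomputable def complDigitsOn (s : ℕ) (B : Set ℕ+) (β : ℕ+ → ℕ) (n : ℕ+) : ℕ :=
  if n ∈ B then s - 1 - β n else β n

lemma complDigitsOn_lt {B : Set ℕ+} {β : ℕ+ → ℕ} (hβ : ∀ n, β n < s) (n : ℕ+) :
    complDigitsOn s B β n < s := by
  have := hβ n
  unfold complDigitsOn
  split_ifs <;> omega

lemma eps_mul_complDigitsOn_div {B : Set ℕ+} {β : ℕ+ → ℕ} {n : ℕ+} (hβ : β n < s) :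
    eps B n * (complDigitsOn s B β n : ℝ) / (s : ℝ) ^ (n : ℕ) =
      (β n : ℝ) / (s : ℝ) ^ (n : ℕ) - B.indicator (fun n => ((s : ℝ) - 1) / (s : ℝ) ^ (n : ℕ)) n := by
  by_cases h : n ∈ B
  · have h1 : 1 ≤ s := by omega
    have h2 : β n ≤ s - 1 := by omega
    simp only [eps, complDigitsOn, h, if_true, indicator_of_mem, Nat.cast_sub h1, Nat.cast_sub h2,
      Nat.cast_one]
    ring
  · simp [eps, complDigitsOn, h]

end

theorem exists_quasiNegaS_representation (s : ℕ) (hs : 2 ≤ s) (B : Set ℕ+)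
    (x : ℝ) (hx : x ∈ Set.Icc (x0lo s B) (x0hi s B)) :
    ∃ α : ℕ+ → ℕ, (∀ n, α n < s) ∧ x = qnsVal s B α := by
  have hshift : x - x0lo s B ∈ Icc 0 1 :=
    ⟨by linarith [hx.1], by linarith [hx.2, x0hi_sub_x0lo hs B]⟩
  obtain ⟨β, hβ, hsum⟩ := exists_digits_hasSum hs hshift
  refine ⟨complDigitsOn s B β, complDigitsOn_lt hβ, ?_⟩
  have hB := ((hasSum_sub_one_div_pow hs).summable.indicator B).hasSum
  have hα := hsum.sub hB
  simp only [← eps_mul_complDigitsOn_div (hβ _)] at hα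
  rw [qnsVal, hα.tsum_eq, x0lo]
  exact (sub_add_cancel ..).symm
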